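/- Let K ≥ 2, let X be uniformly distributed on 𝒳={1,…,K}, let ρ be the Hamming distortion (ρ(x,x̂)=0 if x=x̂ and 1 otherwise), and let Q:(0,∞)→ℝ be convex with lim_{t→0+} t·Q(1/t)=0. Then for every D with 0 < D ≤ (K−1)/K, R^Q(D) := inf{ I^Q(X;X̂) : conditional pmfs p(x̂|x) with Σ_{x,x̂}(1/K)p(x̂|x)ρ(x,x̂) ≤ D } = (1−D)·Q( 1/(K(1−D)) ) + D·Q( (K−1)/(K·D) ). -/

import Mathlib

/-!
Writing `F(p, t) = p · Q(t / p)` for the perspective of `Q` (with `F(0, t) = 0`), the objective is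
`∑_{x,x̂} F(p(x, x̂), p(x) p(x̂))`. The hypothesis `t · Q(1/t) → 0` says `Q(s)/s → 0` at infinity,
which forces the convex `Q` to be antitone; with this, `F` is subadditive and positively homogeneous
on `{p ≥ 0, t ≥ 0, p > 0 → t > 0}`, including the `p = 0` convention. Summing the diagonal and the
off-diagonal pairs separately gives the lower bound `g(ε)`, where `ε ≤ D` is the error probability
and `g(d) = F(1 - d, 1/K) + F(d, (K-1)/K)`. The function `g` is convex, and by subadditivity it is
minimal at `d = (K-1)/K`, so it is antitone on `[0, (K-1)/K]` and `g(ε) ≥ g(D)`. The symmetric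
channel attains `g(D)`.
-/

open Finset Filter Set Topology

lemma ConvexOn.antitoneOn_of_tendsto_div_atTop {Q : ℝ → ℝ} (hQ : ConvexOn ℝ (Ioi 0) Q)
    (hlim : Tendsto (fun s => Q s / s) atTop (𝓝 0)) : AntitoneOn Q (Ioi 0) := by
  intro a ha b hb hab
  rcases hab.eq_or_lt with rfl | hab
  · rfl
  set m := (Q b - Q a) / (b - a)
  have hsecant : ∀ᶠ s in atTop, m * (1 - b / s) ≤ Q s / s - Q b / s := by
    filter_upwards [eventually_gt_atTop b] with s hs
    have hs₀ : 0 < s := lt_trans hb hs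
    have hslope := hQ.slope_mono_adjacent ha hs₀ hab hs
    rw [le_div_iff₀ (sub_pos.2 hs)] at hslope
    rw [← sub_div, le_div_iff₀ hs₀]
    calc m * (1 - b / s) * s = m * (s - b) := by field_simp
      _ ≤ Q s - Q b := hslope
  have hleft : Tendsto (fun s => m * (1 - b / s)) atTop (𝓝 (m * (1 - 0))) :=
    (tendsto_const_nhds.sub (tendsto_const_nhds.div_atTop tendsto_id)).const_mul m
  have hright : Tendsto (fun s => Q s / s - Q b / s) atTop (𝓝 (0 - 0)) :=
    hlim.sub (tendsto_const_nhds.div_atTop tendsto_id)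
  have hm : m ≤ 0 := by simpa using le_of_tendsto_of_tendsto hleft hright hsecant
  rwa [div_le_iff₀ (sub_pos.2 hab), zero_mul, sub_nonpos] at hm

lemma tendsto_div_atTop_of_tendsto_mul_one_div {Q : ℝ → ℝ}
    (hQlim : Tendsto (fun t : ℝ => t * Q (1 / t)) (𝓝[>] 0) (𝓝 0)) :
    Tendsto (fun s => Q s / s) atTop (𝓝 0) := by
  refine (hQlim.comp tendsto_inv_atTop_nhdsGT_zero).congr' ?_
  filter_upwards [eventually_gt_atTop 0] with s hs
  simp [div_eq_inv_mul]

/-- The value `0` at `p = 0` is the paper's convention for summands with `p(x̂|x) = 0`. -/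
noncomputable def perspective (Q : ℝ → ℝ) (z : ℝ × ℝ) : ℝ :=
  if 0 < z.1 then z.1 * Q (z.2 / z.1) else 0

def perspectiveDomain : Set (ℝ × ℝ) := {z | 0 ≤ z.1 ∧ 0 ≤ z.2 ∧ (0 < z.1 → 0 < z.2)}

lemma add_mem_perspectiveDomain {z w : ℝ × ℝ} (hz : z ∈ perspectiveDomain)
    (hw : w ∈ perspectiveDomain) : z + w ∈ perspectiveDomain := by
  obtain ⟨hz₁, hz₂, hz⟩ := hz
  obtain ⟨hw₁, hw₂, hw⟩ := hw
  refine ⟨add_nonneg hz₁ hw₁, add_nonneg hz₂ hw₂, fun h => ?_⟩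
  rw [Prod.fst_add] at h
  rw [Prod.snd_add]
  rcases hz₁.lt_or_eq with hz₁ | hz₁
  · linarith [hz hz₁]
  · linarith [hw (by linarith)]

lemma smul_mem_perspectiveDomain {c : ℝ} (hc : 0 ≤ c) {z : ℝ × ℝ}
    (hz : z ∈ perspectiveDomain) : c • z ∈ perspectiveDomain := by
  obtain ⟨hz₁, hz₂, hz⟩ := hz
  refine ⟨mul_nonneg hc hz₁, mul_nonneg hc hz₂, fun h => ?_⟩
  simp only [Prod.smul_fst, Prod.smul_snd, smul_eq_mul] at h ⊢
  exact mul_pos (pos_of_mul_pos_left h hz₁) (hz (pos_of_mul_pos_right h hc))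

lemma convex_perspectiveDomain : Convex ℝ perspectiveDomain :=
  fun _ hz _ hw _ _ ha hb _ =>
    add_mem_perspectiveDomain (smul_mem_perspectiveDomain ha hz) (smul_mem_perspectiveDomain hb hw)

namespace perspective

variable {Q : ℝ → ℝ}

lemma of_pos {z : ℝ × ℝ} (hz : 0 < z.1) : perspective Q z = z.1 * Q (z.2 / z.1) := if_pos hz

lemma of_nonpos {z : ℝ × ℝ} (hz : z.1 ≤ 0) : perspective Q z = 0 := if_neg hz.not_gt

lemma smul {c : ℝ} (hc : 0 ≤ c) (z : ℝ × ℝ) : perspective Q (c • z) = c * perspective Q z := by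
  rcases hc.lt_or_eq with hc | rfl
  · unfold perspective
    simp only [Prod.smul_fst, Prod.smul_snd, smul_eq_mul, mul_pos_iff_of_pos_left hc,
      mul_div_mul_left _ _ hc.ne']
    split_ifs <;> ring
  · rw [zero_smul, zero_mul, of_nonpos le_rfl]

lemma add_le_of_fst_pos (hQ : ConvexOn ℝ (Ioi 0) Q) {z w : ℝ × ℝ} (hz₁ : 0 < z.1)
    (hw₁ : 0 < w.1) (hz₂ : 0 < z.2) (hw₂ : 0 < w.2) :
    perspective Q (z + w) ≤ perspective Q z + perspective Q w := by
  obtain ⟨p₁, t₁⟩ := z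
  obtain ⟨p₂, t₂⟩ := w
  dsimp only at hz₁ hw₁ hz₂ hw₂
  have hp : 0 < p₁ + p₂ := add_pos hz₁ hw₁
  rw [Prod.mk_add_mk, of_pos hp, of_pos hz₁, of_pos hw₁]
  have hconv := hQ.2 (div_pos hz₂ hz₁) (div_pos hw₂ hw₁) (div_pos hz₁ hp).le (div_pos hw₁ hp).le
    (by field_simp)
  have hmid : (p₁ / (p₁ + p₂)) • (t₁ / p₁) + (p₂ / (p₁ + p₂)) • (t₂ / p₂)
      = (t₁ + t₂) / (p₁ + p₂) := by
    simp only [smul_eq_mul]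
    field_simp
  rw [hmid, smul_eq_mul, smul_eq_mul] at hconv
  calc (p₁ + p₂) * Q ((t₁ + t₂) / (p₁ + p₂))
      ≤ (p₁ + p₂) * (p₁ / (p₁ + p₂) * Q (t₁ / p₁) + p₂ / (p₁ + p₂) * Q (t₂ / p₂)) := by gcongr
    _ = p₁ * Q (t₁ / p₁) + p₂ * Q (t₂ / p₂) := by field_simp

lemma add_le_of_fst_eq_zero (hanti : AntitoneOn Q (Ioi 0)) {z w : ℝ × ℝ}
    (hz : z ∈ perspectiveDomain) (hw : w ∈ perspectiveDomain) (hz₁ : z.1 = 0) :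
    perspective Q (z + w) ≤ perspective Q z + perspective Q w := by
  rw [of_nonpos hz₁.le, zero_add]
  rcases hw.1.lt_or_eq with hw₁ | hw₁
  · have hzw₁ : (z + w).1 = w.1 := by rw [Prod.fst_add, hz₁, zero_add]
    rw [of_pos (hzw₁ ▸ hw₁), of_pos hw₁, hzw₁]
    have hw₂ : 0 < w.2 / w.1 := div_pos (hw.2.2 hw₁) hw₁
    have hzw₂ : w.2 / w.1 ≤ (z + w).2 / w.1 := by
      rw [Prod.snd_add]
      gcongr
      linarith [hz.2.1]
    exact mul_le_mul_of_nonneg_left (hanti hw₂ (hw₂.trans_le hzw₂) hzw₂) hw₁.le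
  · rw [of_nonpos (by rw [Prod.fst_add, hz₁, ← hw₁, add_zero]), of_nonpos hw₁.ge]

variable (hQ : ConvexOn ℝ (Ioi 0) Q) (hanti : AntitoneOn Q (Ioi 0))
include hQ hanti

lemma add_le {z w : ℝ × ℝ} (hz : z ∈ perspectiveDomain) (hw : w ∈ perspectiveDomain) :
    perspective Q (z + w) ≤ perspective Q z + perspective Q w := by
  rcases hz.1.lt_or_eq with hz₁ | hz₁
  · rcases hw.1.lt_or_eq with hw₁ | hw₁
    · exact add_le_of_fst_pos hQ hz₁ hw₁ (hz.2.2 hz₁) (hw.2.2 hw₁)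
    · rw [add_comm z, add_comm (perspective Q z)]
      exact add_le_of_fst_eq_zero hanti hw hz hw₁.symm
  · exact add_le_of_fst_eq_zero hanti hz hw hz₁.symm

lemma sum_le {ι : Type*} (s : Finset ι) (g : ι → ℝ × ℝ)
    (hg : ∀ i ∈ s, g i ∈ perspectiveDomain) :
    perspective Q (∑ i ∈ s, g i) ≤ ∑ i ∈ s, perspective Q (g i) :=
  le_sum_of_subadditive_on_pred (perspective Q) (· ∈ perspectiveDomain) (of_nonpos le_rfl).le
    (fun _ _ => add_le hQ hanti) (fun _ _ => add_mem_perspectiveDomain) g hg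

lemma convexOn : ConvexOn ℝ perspectiveDomain (perspective Q) :=
  ⟨convex_perspectiveDomain, fun z hz w hw a b ha hb _ => by
    rw [smul_eq_mul, smul_eq_mul, ← smul ha, ← smul hb]
    exact add_le hQ hanti (smul_mem_perspectiveDomain ha hz) (smul_mem_perspectiveDomain hb hw)⟩

lemma antitoneOn_one_sub_add {u v : ℝ} (hu : 0 < u) (hv : 0 < v) (huv : u + v = 1) :
    AntitoneOn (fun d => perspective Q (1 - d, u) + perspective Q (d, v)) (Icc 0 v) := by
  set g := fun d => perspective Q (1 - d, u) + perspective Q (d, v)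
  have hmem : ∀ {p t : ℝ}, 0 ≤ p → 0 < t → (p, t) ∈ perspectiveDomain :=
    fun hp ht => ⟨hp, ht.le, fun _ => ht⟩
  have hconv : ConvexOn ℝ (Icc 0 1) g := by
    refine ⟨convex_Icc 0 1, fun d hd e he a b ha hb hab => ?_⟩
    have h₁ := (convexOn hQ hanti).2 (hmem (sub_nonneg.2 hd.2) hu) (hmem (sub_nonneg.2 he.2) hu)
      ha hb hab
    have h₂ := (convexOn hQ hanti).2 (hmem hd.1 hv) (hmem he.1 hv) ha hb hab
    have e₁ : a • (1 - d, u) + b • (1 - e, u) = (1 - (a * d + b * e), u) := by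
      ext <;> simp only [Prod.fst_add, Prod.snd_add, Prod.smul_fst, Prod.smul_snd, smul_eq_mul]
      · linear_combination hab
      · linear_combination u * hab
    have e₂ : a • (d, v) + b • (e, v) = (a * d + b * e, v) := by
      ext <;> simp only [Prod.fst_add, Prod.snd_add, Prod.smul_fst, Prod.smul_snd, smul_eq_mul]
      linear_combination v * hab
    rw [e₁] at h₁
    rw [e₂] at h₂
    simp only [g, smul_eq_mul] at h₁ h₂ ⊢
    linarith
  have hmin : ∀ d ∈ Icc (0 : ℝ) 1, g v ≤ g d := by
    intro d hd
    have hsplit : ((1 - d, u) + (d, v) : ℝ × ℝ) = (1, 1) := by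
      rw [Prod.mk_add_mk, sub_add_cancel, huv]
    calc g v = perspective Q (u, u) + perspective Q (v, v) := by
          simp only [g, ← huv, add_sub_cancel_right]
      _ = perspective Q ((1 - d, u) + (d, v)) := by
          rw [hsplit, of_pos hu, of_pos hv, of_pos one_pos]
          simp only [div_self hu.ne', div_self hv.ne', div_one]
          linear_combination Q 1 * huv
      _ ≤ g d := add_le hQ hanti (hmem (sub_nonneg.2 hd.2) hu) (hmem hd.1 hv)
  have hv₁ : v ≤ 1 := by linarith
  intro d hd e he hde
  rcases he.2.lt_or_eq with hev | rfl
  · exact hconv.le_left_of_right_le'' ⟨hd.1, hd.2.trans hv₁⟩ ⟨hv.le, hv₁⟩ hde hev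
      (hmin e ⟨he.1, he.2.trans hv₁⟩)
  · exact hmin d ⟨hd.1, hd.2.trans hv₁⟩

end perspective

section GeneralizedMutualInformation

variable {α β : Type*} [Fintype α]

/-- `(p(x, y), p(x) p(y))` for the source `px` and the channel `pc`. -/
def jointAndProduct (px : α → ℝ) (pc : α → β → ℝ) (x : α) (y : β) : ℝ × ℝ :=
  (px x * pc x y, px x * ∑ x', px x' * pc x' y)

lemma sum_filter_pos_eq_sum_perspective [Fintype β] (Q : ℝ → ℝ) {px : α → ℝ}
    (hpx : ∀ x, 0 < px x) (pc : α → β → ℝ) :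
    ∑ x, ∑ y ∈ univ.filter (fun y => 0 < pc x y),
        px x * pc x y * Q ((∑ x', px x' * pc x' y) / pc x y)
      = ∑ x, ∑ y, perspective Q (jointAndProduct px pc x y) := by
  refine sum_congr rfl fun x _ => ?_
  rw [sum_filter]
  refine sum_congr rfl fun y _ => ?_
  by_cases hxy : 0 < pc x y
  · rw [if_pos hxy, perspective.of_pos (mul_pos (hpx x) hxy), jointAndProduct,
      mul_div_mul_left _ _ (hpx x).ne']
  · rw [if_neg hxy,
      perspective.of_nonpos (mul_nonpos_of_nonneg_of_nonpos (hpx x).le (not_lt.1 hxy))]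

lemma jointAndProduct_mem_perspectiveDomain {px : α → ℝ} (hpx : ∀ x, 0 ≤ px x)
    {pc : α → β → ℝ} (hpc : ∀ x y, 0 ≤ pc x y) (x : α) (y : β) :
    jointAndProduct px pc x y ∈ perspectiveDomain := by
  have hle : px x * pc x y ≤ ∑ x', px x' * pc x' y :=
    single_le_sum (f := fun x' => px x' * pc x' y) (fun x' _ => mul_nonneg (hpx x') (hpc x' y))
      (mem_univ x)
  have hjoint : 0 ≤ px x * pc x y := mul_nonneg (hpx x) (hpc x y)
  refine ⟨hjoint, mul_nonneg (hpx x) (hjoint.trans hle), fun h => ?_⟩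
  exact mul_pos (pos_of_mul_pos_left h (hpc x y)) (h.trans_le hle)

end GeneralizedMutualInformation

section Hamming

variable {K : ℕ}

noncomputable def uniformJointAndProduct (K : ℕ) (pc : Fin K → Fin K → ℝ) (z : Fin K × Fin K) :
    ℝ × ℝ :=
  jointAndProduct (fun _ => 1 / (K : ℝ)) pc z.1 z.2

lemma sum_one_div_mul_eq_one_div {pc : Fin K → Fin K → ℝ} (hrow : ∀ x, ∑ y, pc x y = 1)
    (x : Fin K) : ∑ y, (1 / (K : ℝ)) * pc x y = 1 / K := by
  rw [← mul_sum, hrow, mul_one]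

section Stochastic

variable {pc : Fin K → Fin K → ℝ} (hK : K ≠ 0) (hrow : ∀ x, ∑ y, pc x y = 1)
include hK hrow

lemma sum_outputDistribution_eq_one : ∑ y, ∑ x', (1 / (K : ℝ)) * pc x' y = 1 := by
  rw [sum_comm, sum_congr rfl fun x _ => sum_one_div_mul_eq_one_div hrow x, sum_const,
    card_univ, Fintype.card_fin, nsmul_eq_mul]
  field_simp

lemma sum_uniformJointAndProduct : ∑ z, uniformJointAndProduct K pc z = (1, 1) := by
  have hcol : ∑ y, (1 / (K : ℝ)) * ∑ x', (1 / (K : ℝ)) * pc x' y = 1 / K := by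
    rw [← mul_sum, sum_outputDistribution_eq_one hK hrow, mul_one]
  refine Prod.ext ?_ ?_
  · rw [Prod.fst_sum, Fintype.sum_prod_type]
    simp only [uniformJointAndProduct, jointAndProduct, sum_one_div_mul_eq_one_div hrow,
      sum_const, card_univ, Fintype.card_fin, nsmul_eq_mul]
    field_simp
  · rw [Prod.snd_sum, Fintype.sum_prod_type]
    simp only [uniformJointAndProduct, jointAndProduct, hcol, sum_const, card_univ,
      Fintype.card_fin, nsmul_eq_mul]
    field_simp

lemma sum_filter_eq_uniformJointAndProduct_snd :
    (∑ z ∈ univ.filter (fun z : Fin K × Fin K => z.1 = z.2), uniformJointAndProduct K pc z).2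
      = 1 / K := by
  rw [← univ_product_univ, ← diag_eq_filter, sum_diag, Prod.snd_sum]
  simp only [uniformJointAndProduct, jointAndProduct]
  rw [← mul_sum, sum_outputDistribution_eq_one hK hrow, mul_one]

end Stochastic

lemma sum_filter_ne_uniformJointAndProduct_fst (pc : Fin K → Fin K → ℝ) :
    (∑ z ∈ univ.filter (fun z : Fin K × Fin K => ¬ z.1 = z.2), uniformJointAndProduct K pc z).1
      = ∑ x, ∑ y, (1 / (K : ℝ)) * pc x y * (if x = y then 0 else 1) := by
  simp only [Prod.fst_sum, uniformJointAndProduct, jointAndProduct, mul_ite, mul_zero, mul_one]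
  rw [← Fintype.sum_prod_type' (f := fun x y => if x = y then (0 : ℝ) else 1 / K * pc x y),
    sum_ite, sum_const_zero, zero_add]

lemma le_sum_perspective_of_hammingDistortion_le {Q : ℝ → ℝ} (hQ : ConvexOn ℝ (Ioi 0) Q)
    (hanti : AntitoneOn Q (Ioi 0)) (hK : 2 ≤ K) {pc : Fin K → Fin K → ℝ}
    (hpc : ∀ x y, 0 ≤ pc x y) (hrow : ∀ x, ∑ y, pc x y = 1) {D : ℝ} (hD0 : 0 ≤ D)
    (hD1 : D ≤ ((K : ℝ) - 1) / K)
    (hdist : ∑ x, ∑ y, (1 / (K : ℝ)) * pc x y * (if x = y then 0 else 1) ≤ D) :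
    perspective Q (1 - D, 1 / K) + perspective Q (D, ((K : ℝ) - 1) / K)
      ≤ ∑ x, ∑ y, perspective Q (jointAndProduct (fun _ => 1 / (K : ℝ)) pc x y) := by
  have hk : (2 : ℝ) ≤ K := by exact_mod_cast hK
  have hK₀ : K ≠ 0 := by omega
  set F := uniformJointAndProduct K pc
  set diag := univ.filter (fun z : Fin K × Fin K => z.1 = z.2)
  set offDiag := univ.filter (fun z : Fin K × Fin K => ¬ z.1 = z.2)
  set ε := ∑ x, ∑ y, (1 / (K : ℝ)) * pc x y * (if x = y then 0 else 1)
  have hF : ∀ z, F z ∈ perspectiveDomain := fun z =>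
    jointAndProduct_mem_perspectiveDomain (fun _ => by positivity) hpc z.1 z.2
  have hoff : (∑ z ∈ offDiag, F z).1 = ε := sum_filter_ne_uniformJointAndProduct_fst pc
  have hdiag : (∑ z ∈ diag, F z).2 = 1 / K := sum_filter_eq_uniformJointAndProduct_snd hK₀ hrow
  obtain ⟨hsplit₁, hsplit₂⟩ := Prod.ext_iff.1 <|
    (sum_filter_add_sum_filter_not univ (fun z : Fin K × Fin K => z.1 = z.2) F).trans
      (sum_uniformJointAndProduct hK₀ hrow)
  rw [Prod.fst_add, hoff] at hsplit₁
  rw [Prod.snd_add, hdiag] at hsplit₂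
  have hdiag' : ∑ z ∈ diag, F z = (1 - ε, (1 : ℝ) / K) :=
    Prod.ext (by dsimp only at hsplit₁ ⊢; linarith) hdiag
  have hoff' : ∑ z ∈ offDiag, F z = (ε, ((K : ℝ) - 1) / K) :=
    Prod.ext hoff (by dsimp only at hsplit₂ ⊢; rw [sub_div, div_self (by positivity)]; linarith)
  have hε : 0 ≤ ε := by
    rw [← hoff, Prod.fst_sum]
    exact sum_nonneg fun z _ => (hF z).1
  have hu : (0 : ℝ) < 1 / K := by positivity
  have hv : (0 : ℝ) < ((K : ℝ) - 1) / K := div_pos (by linarith) (by positivity)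
  have huv : (1 : ℝ) / K + ((K : ℝ) - 1) / K = 1 := by field_simp; ring
  calc perspective Q (1 - D, 1 / K) + perspective Q (D, ((K : ℝ) - 1) / K)
      ≤ perspective Q (1 - ε, 1 / K) + perspective Q (ε, ((K : ℝ) - 1) / K) :=
        perspective.antitoneOn_one_sub_add hQ hanti hu hv huv ⟨hε, hdist.trans hD1⟩ ⟨hD0, hD1⟩
          hdist
    _ = perspective Q (∑ z ∈ diag, F z) + perspective Q (∑ z ∈ offDiag, F z) := by
        rw [hdiag', hoff']
    _ ≤ ∑ z ∈ diag, perspective Q (F z) + ∑ z ∈ offDiag, perspective Q (F z) :=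
        add_le_add (perspective.sum_le hQ hanti _ _ fun z _ => hF z)
          (perspective.sum_le hQ hanti _ _ fun z _ => hF z)
    _ = ∑ x, ∑ y, perspective Q (jointAndProduct (fun _ => 1 / (K : ℝ)) pc x y) := by
        rw [sum_filter_add_sum_filter_not, Fintype.sum_prod_type]
        rfl

lemma sum_ite_eq_fin (x : Fin K) (a b : ℝ) :
    ∑ y, (if x = y then a else b) = a + ((K : ℝ) - 1) * b := by
  have hsplit : ∀ y, (if x = y then a else b) = b + if x = y then a - b else 0 := fun y => by
    split_ifs <;> ring
  rw [sum_congr rfl fun y _ => hsplit y, sum_add_distrib, sum_const, card_univ, Fintype.card_fin,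
    nsmul_eq_mul, sum_ite_eq, if_pos (Finset.mem_univ x)]
  ring

noncomputable def symmetricChannel (K : ℕ) (D : ℝ) (x y : Fin K) : ℝ :=
  if x = y then 1 - D else D / (K - 1)

lemma symmetricChannel_comm (D : ℝ) (x y : Fin K) :
    symmetricChannel K D x y = symmetricChannel K D y x := by
  simp only [symmetricChannel, eq_comm]

lemma symmetricChannel_nonneg (hK : 2 ≤ K) {D : ℝ} (hD0 : 0 ≤ D) (hD1 : D ≤ 1) (x y : Fin K) :
    0 ≤ symmetricChannel K D x y := by
  have hk : (2 : ℝ) ≤ K := by exact_mod_cast hK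
  unfold symmetricChannel
  split_ifs
  · linarith
  · exact div_nonneg hD0 (by linarith)

lemma sum_symmetricChannel (hK : 2 ≤ K) (D : ℝ) (x : Fin K) :
    ∑ y, symmetricChannel K D x y = 1 := by
  have hk : (2 : ℝ) ≤ K := by exact_mod_cast hK
  simp only [symmetricChannel]
  rw [sum_ite_eq_fin, mul_div_cancel₀ _ (by linarith)]
  ring

lemma hammingDistortion_symmetricChannel (hK : 2 ≤ K) (D : ℝ) :
    ∑ x, ∑ y, (1 / (K : ℝ)) * symmetricChannel K D x y * (if x = y then 0 else 1) = D := by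
  have hk : (2 : ℝ) ≤ K := by exact_mod_cast hK
  have hk₁ : (K : ℝ) - 1 ≠ 0 := by linarith
  have hterm : ∀ x y : Fin K,
      (1 / (K : ℝ)) * symmetricChannel K D x y * (if x = y then 0 else 1)
        = if x = y then 0 else D / (K - 1) / K := fun x y => by
    simp only [symmetricChannel]
    split_ifs <;> ring
  simp only [hterm, sum_ite_eq_fin, sum_const, card_univ, Fintype.card_fin, nsmul_eq_mul]
  field_simp
  ring

lemma sum_perspective_symmetricChannel (Q : ℝ → ℝ) (hK : 2 ≤ K) (D : ℝ) :
    ∑ x, ∑ y, perspective Q (jointAndProduct (fun _ => 1 / (K : ℝ)) (symmetricChannel K D) x y)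
      = perspective Q (1 - D, 1 / K) + perspective Q (D, ((K : ℝ) - 1) / K) := by
  have hk : (2 : ℝ) ≤ K := by exact_mod_cast hK
  have hcol : ∀ y, ∑ x', (1 / (K : ℝ)) * symmetricChannel K D x' y = 1 / K := fun y => by
    simp_rw [symmetricChannel_comm D _ y]
    rw [← mul_sum, sum_symmetricChannel hK, mul_one]
  have hterm : ∀ x y,
      perspective Q (jointAndProduct (fun _ => 1 / (K : ℝ)) (symmetricChannel K D) x y)
        = 1 / K * if x = y then perspective Q (1 - D, 1 / K)
            else perspective Q (D / (K - 1), 1 / K) := fun x y => by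
    have hscale : jointAndProduct (fun _ => 1 / (K : ℝ)) (symmetricChannel K D) x y
        = (1 / (K : ℝ)) • (symmetricChannel K D x y, (1 : ℝ) / K) := by
      rw [jointAndProduct, hcol, Prod.smul_mk, smul_eq_mul, smul_eq_mul]
    rw [hscale, perspective.smul (by positivity), symmetricChannel,
      apply_ite (fun p => perspective Q (p, 1 / K))]
  have hoff : ((K : ℝ) - 1) * perspective Q (D / (K - 1), 1 / K)
      = perspective Q (D, ((K : ℝ) - 1) / K) := by
    rw [← perspective.smul (by linarith), Prod.smul_mk, smul_eq_mul, smul_eq_mul,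
      mul_div_cancel₀ _ (by linarith), mul_one_div]
  simp only [hterm, ← mul_sum, sum_ite_eq_fin, sum_const, card_univ, Fintype.card_fin,
    nsmul_eq_mul, hoff]
  field_simp

end Hamming

/-- Closed form of the generalized rate–distortion function of a uniform source
w.r.t. the Hamming distortion measure:
`R^Q(D) = (1-D)·Q(1/(K(1-D))) + D·Q((K-1)/(KD))`. -/
theorem stmt_11 (K : ℕ) (hK : 2 ≤ K)
    (Q : ℝ → ℝ) (hQ : ConvexOn ℝ (Set.Ioi (0:ℝ)) Q)
    (hQlim : Filter.Tendsto (fun t : ℝ => t * Q (1 / t))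
      (nhdsWithin 0 (Set.Ioi 0)) (nhds 0))
    (D : ℝ) (hD0 : 0 < D) (hD1 : D ≤ ((K:ℝ) - 1)/(K:ℝ)) :
    sInf { r : ℝ | ∃ pc : Fin K → Fin K → ℝ,
        (∀ x xh, 0 ≤ pc x xh) ∧ (∀ x, ∑ xh, pc x xh = 1) ∧
        (∑ x, ∑ xh, (1/(K:ℝ)) * pc x xh * (if x = xh then 0 else 1) ≤ D) ∧
        r = ∑ x, ∑ xh ∈ Finset.univ.filter (fun xh => 0 < pc x xh),
            (1/(K:ℝ)) * pc x xh * Q ((∑ x', (1/(K:ℝ)) * pc x' xh) / pc x xh) }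
      = (1 - D) * Q (1/((K:ℝ) * (1 - D))) + D * Q (((K:ℝ) - 1)/((K:ℝ) * D)) := by
  have hk : (2 : ℝ) ≤ K := by exact_mod_cast hK
  have hD1' : D < 1 := hD1.trans_lt (by rw [div_lt_one (by positivity)]; linarith)
  have hanti := hQ.antitoneOn_of_tendsto_div_atTop (tendsto_div_atTop_of_tendsto_mul_one_div hQlim)
  have hobj := sum_filter_pos_eq_sum_perspective Q (px := fun _ : Fin K => 1 / (K : ℝ))
    (β := Fin K) fun _ => by positivity
  have hvalue : perspective Q (1 - D, 1 / K) + perspective Q (D, ((K : ℝ) - 1) / K)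
      = (1 - D) * Q (1 / ((K : ℝ) * (1 - D))) + D * Q (((K : ℝ) - 1) / ((K : ℝ) * D)) := by
    rw [perspective.of_pos (sub_pos.2 hD1'), perspective.of_pos hD0, div_div, div_div]
  rw [← hvalue]
  refine IsLeast.csInf_eq ⟨⟨symmetricChannel K D, symmetricChannel_nonneg hK hD0.le hD1'.le,
    sum_symmetricChannel hK D, (hammingDistortion_symmetricChannel hK D).le, ?_⟩, ?_⟩
  · rw [hobj, sum_perspective_symmetricChannel Q hK]
  · rintro r ⟨pc, hpc, hrow, hdist, rfl⟩
    rw [hobj]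
    exact le_sum_perspective_of_hammingDistortion_le hQ hanti hK hpc hrow hD0.le hD1 hdist
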